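/- arXiv:math/9802092 — 3 statements merged into one kernel-verified Lean document; each statement's English description precedes it below -/
import Mathlib

section
/- The element $t + t^2$ has infinite order in the Nottingham group over $\mathbb{F}_p$: for every $n \geq 1$, the $n$-fold composition $(t+t^2)^{\circ n} \neq t$. -/
open PowerSeries

/-- Composition of power series `f ∘ g` (intended for `g` with zero constant term). -/
noncomputable def pcomp {k : Type} [CommRing k] (f g : PowerSeries k) : PowerSeries k :=
  PowerSeries.mk fun n =>
    PowerSeries.coeff (R := k) n (Polynomial.eval₂ (PowerSeries.C (R := k)) g (PowerSeries.trunc (n + 1) f))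

/-- `n`-fold compositional iterate of `f`. -/
noncomputable def pcompIter {k : Type} [CommRing k] (f : PowerSeries k) : ℕ → PowerSeries k
  | 0 => PowerSeries.X
  | n + 1 => pcomp f (pcompIter f n)

/-- Membership in the Nottingham group: `f = t + a₂ t² + ⋯`. -/
def IsNott {k : Type} [CommRing k] (f : PowerSeries k) : Prop :=
  PowerSeries.coeff (R := k) 0 f = 0 ∧ PowerSeries.coeff (R := k) 1 f = 1

lemma trunc_X_pow' {k : Type} [CommRing k] (m s : ℕ) :
    trunc m ((X : PowerSeries k) ^ s) = if s < m then Polynomial.X ^ s else 0 := by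
  ext d
  rw [PowerSeries.coeff_trunc, PowerSeries.coeff_X_pow]
  by_cases hds : d = s
  · subst hds
    by_cases hsm : d < m <;> simp [hsm, Polynomial.coeff_X_pow]
  · split_ifs <;> simp [Polynomial.coeff_X_pow, hds]

lemma trunc_X' {k : Type} [CommRing k] (m : ℕ) :
    trunc m (X : PowerSeries k) = if 1 < m then Polynomial.X else 0 := by
  rw [← pow_one (X : PowerSeries k), trunc_X_pow']
  split_ifs <;> simp

/-- Composing `X + X²` with `g` (zero constant term) gives `g + g²`. -/
lemma pcomp_eq {k : Type} [CommRing k] (g : PowerSeries k)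
    (hg : constantCoeff (R := k) g = 0) :
    pcomp ((X : PowerSeries k) + X ^ 2) g = g + g ^ 2 := by
  unfold pcomp
  ext n
  rw [coeff_mk, map_add, trunc_X_pow', trunc_X']
  match n with
  | 0 =>
      norm_num
      simp [PowerSeries.coeff_zero_eq_constantCoeff, hg, pow_two]
  | 1 =>
      norm_num
      have h2 : (coeff (R := k) 1) (g ^ 2) = 0 := by
        rw [pow_two, PowerSeries.coeff_mul]
        simp [Finset.Nat.antidiagonal_succ, hg]
      simp [h2]
  | (m + 2) =>
      rw [if_pos (by omega), if_pos (by omega)]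
      simp [pow_two]

/-- The `n`-th iterate of `X + X²` is a polynomial of degree `2^n` with top coefficient `1`. -/
lemma pcompIter_inv {k : Type} [CommRing k] (n : ℕ) :
    constantCoeff (R := k) (pcompIter (X + X ^ 2) n) = 0 ∧
    coeff (R := k) (2 ^ n) (pcompIter (X + X ^ 2) n) = 1 ∧
    ∀ m, 2 ^ n < m → coeff (R := k) m (pcompIter (X + X ^ 2) n) = 0 := by
  induction n with
  | zero =>
      refine ⟨by simp [pcompIter], by simp [pcompIter], fun m hm => ?_⟩
      simp only [pcompIter, PowerSeries.coeff_X]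
      rw [if_neg (by omega)]
  | succ n ih =>
      obtain ⟨h0, h1, h2⟩ := ih
      set g := pcompIter ((X : PowerSeries k) + X ^ 2) n with hgdef
      have hstep : pcompIter ((X : PowerSeries k) + X ^ 2) (n + 1) = g + g ^ 2 := by
        rw [pcompIter, pcomp_eq g h0]
      rw [hstep]
      have hmul : ∀ m, 2 ^ (n + 1) ≤ m →
          coeff (R := k) m (g ^ 2) = (if m = 2 ^ (n + 1) then 1 else 0) := by
        intro m hm
        rw [pow_two, PowerSeries.coeff_mul]
        by_cases hme : m = 2 ^ (n + 1)
        · subst hme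
          rw [if_pos rfl]
          rw [Finset.sum_eq_single (2 ^ n, 2 ^ n)]
          · rw [h1, one_mul]
          · rintro ⟨i, j⟩ hij hne
            rw [Finset.HasAntidiagonal.mem_antidiagonal] at hij
            have : 2 ^ n < i ∨ 2 ^ n < j := by
              rcases Nat.lt_or_ge (2 ^ n) i with h | h
              · exact Or.inl h
              · right
                have : i ≠ 2 ^ n ∨ j ≠ 2 ^ n := by
                  by_contra hc
                  push_neg at hc
                  exact hne (by simp [hc.1, hc.2])
                have hpow : 2 ^ (n + 1) = 2 ^ n + 2 ^ n := by ring
                omega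
            rcases this with h | h
            · rw [h2 i h, zero_mul]
            · rw [h2 j h, mul_zero]
          · intro hnotin
            exfalso
            apply hnotin
            rw [Finset.HasAntidiagonal.mem_antidiagonal]
            ring
        · rw [if_neg hme]
          apply Finset.sum_eq_zero
          rintro ⟨i, j⟩ hij
          rw [Finset.HasAntidiagonal.mem_antidiagonal] at hij
          have : 2 ^ n < i ∨ 2 ^ n < j := by
            have hpow : 2 ^ (n + 1) = 2 ^ n + 2 ^ n := by ring
            omega
          rcases this with h | h
          · rw [h2 i h, zero_mul]
          · rw [h2 j h, mul_zero]
      refine ⟨by simp [map_add, map_pow, h0], ?_, fun m hm => ?_⟩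
      · rw [map_add, h2 _ (by have := Nat.pow_lt_pow_right (by norm_num : 1 < 2) (Nat.lt_succ_self n); omega), hmul _ le_rfl, if_pos rfl, zero_add]
      · rw [map_add, h2 _ (lt_trans (by have := Nat.pow_lt_pow_right (by norm_num : 1 < 2) (Nat.lt_succ_self n); omega) hm), hmul _ (le_of_lt hm), if_neg (by omega), add_zero]

theorem stmt9 (p : ℕ) [Fact p.Prime] :
    ∀ n, 1 ≤ n →
      pcompIter (PowerSeries.X + PowerSeries.X ^ 2 : PowerSeries (ZMod p)) n
        ≠ PowerSeries.X := by
  intro n hn heq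
  obtain ⟨-, h1, -⟩ := pcompIter_inv (k := ZMod p) n
  rw [heq, PowerSeries.coeff_X, if_neg (by have := Nat.one_lt_two_pow (n := n) (by omega); omega)] at h1
  exact zero_ne_one h1
end

section
/- Let $q = p^r$ with $r \geq 1$ and let $T = S_q$ be the subset of the Nottingham group over $\mathbb{F}_p$ consisting of power series of the form $t + \sum_{i \geq 1} a_i t^{1+qi}$ with $a_i \in \mathbb{F}_p$. Then $T$ is closed under composition and under compositional inversion, i.e., $T$ is a subgroup of the Nottingham group. -/
open PowerSeries

/-- Membership in `T = S_q`: series of the form `t + ∑_{i≥1} a_i t^{1+qi}`. -/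
def InT {k : Type} [CommRing k] (q : ℕ) (f : PowerSeries k) : Prop :=
  PowerSeries.coeff (R := k) 0 f = 0 ∧ PowerSeries.coeff (R := k) 1 f = 1 ∧
    ∀ m, 2 ≤ m → ¬ q ∣ (m - 1) → PowerSeries.coeff (R := k) m f = 0

/-- Membership in `T_i = {f ∈ T : f(t) ≡ t mod t^{1+qi}}`. -/
def InTi {k : Type} [CommRing k] (q : ℕ) (f : PowerSeries k) (i : ℕ) : Prop :=
  InT q f ∧ ∀ m, 2 ≤ m → m < 1 + q * i → PowerSeries.coeff (R := k) m f = 0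

open Finset

variable {k : Type} [CommRing k]

theorem coeff_pcomp (f g : PowerSeries k) (n : ℕ) :
    coeff (R := k) n (pcomp f g) = ∑ m ∈ range (n + 1), coeff (R := k) m f * coeff (R := k) n (g ^ m) := by
  rw [pcomp, coeff_mk,
    Polynomial.eval₂_eq_sum_range' (C (R := k)) (PowerSeries.natDegree_trunc_lt f n) g,
    map_sum]
  refine Finset.sum_congr rfl fun m hm => ?_
  rw [Finset.mem_range] at hm
  rw [PowerSeries.coeff_trunc, if_pos hm, coeff_C_mul]

theorem coeff_pow_eq_zero {g : PowerSeries k} (hg : coeff (R := k) 0 g = 0) :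
    ∀ m n : ℕ, n < m → coeff (R := k) n (g ^ m) = 0 := by
  intro m
  induction m with
  | zero => intro n hn; omega
  | succ m ih =>
    intro n hn
    rw [pow_succ, coeff_mul]
    refine Finset.sum_eq_zero fun x hx => ?_
    rw [Finset.HasAntidiagonal.mem_antidiagonal] at hx
    rcases Nat.eq_zero_or_pos x.2 with h | h
    · simp [h, hg]
    · rw [ih x.1 (by omega), zero_mul]

theorem coeff_pcomp_ge {g : PowerSeries k} (hg : coeff (R := k) 0 g = 0) (f : PowerSeries k)
    {n N : ℕ} (hN : n < N) :
    coeff (R := k) n (pcomp f g) = ∑ m ∈ range N, coeff (R := k) m f * coeff (R := k) n (g ^ m) := by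
  rw [coeff_pcomp]
  refine Finset.sum_subset (Finset.range_subset_range.2 hN) fun x _ hx2 => ?_
  rw [Finset.mem_range, not_lt] at hx2
  rw [coeff_pow_eq_zero hg x n (by omega), mul_zero]

theorem qsupp_pow {q : ℕ} (hq : 2 ≤ q) {g : PowerSeries k} (hg : ∀ m, m % q ≠ 1 → coeff (R := k) m g = 0) :
    ∀ (j m : ℕ), m % q ≠ j % q → coeff (R := k) m (g ^ j) = 0 := by
  intro j
  induction j with
  | zero =>
    intro m hm
    have hm0 : m ≠ 0 := by rintro rfl; exact hm rfl
    simp [pow_zero, PowerSeries.coeff_one, hm0]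
  | succ j ih =>
    intro m hm
    rw [pow_succ, coeff_mul]
    refine Finset.sum_eq_zero fun x hx => ?_
    rw [Finset.HasAntidiagonal.mem_antidiagonal] at hx
    by_cases h2 : x.2 % q = 1
    · by_cases h1 : x.1 % q = j % q
      · exfalso
        apply hm
        have e1 : (j + 1) % q = (j % q + 1 % q) % q := Nat.add_mod j 1 q
        rw [Nat.mod_eq_of_lt (show 1 < q by omega)] at e1
        rw [← hx, Nat.add_mod, h1, h2, e1]
      · rw [ih x.1 h1, zero_mul]
    · rw [hg x.2 h2, mul_zero]

theorem coeff_pow_congr {u v : PowerSeries k} {m : ℕ}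
    (h : ∀ i ≤ m, coeff (R := k) i u = coeff (R := k) i v) :
    ∀ (j : ℕ) (i : ℕ), i ≤ m → coeff (R := k) i (u ^ j) = coeff (R := k) i (v ^ j) := by
  intro j
  induction j with
  | zero => intro i _; rfl
  | succ j ih =>
    intro i hi
    rw [pow_succ, pow_succ, coeff_mul, coeff_mul]
    refine Finset.sum_congr rfl fun x hx => ?_
    rw [Finset.HasAntidiagonal.mem_antidiagonal] at hx
    rw [ih x.1 (by omega), h x.2 (by omega)]

theorem coeff_pcomp_congr {u v : PowerSeries k} {n : ℕ}
    (h : ∀ i ≤ n, coeff (R := k) i u = coeff (R := k) i v) (f : PowerSeries k) :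
    coeff (R := k) n (pcomp f u) = coeff (R := k) n (pcomp f v) := by
  rw [coeff_pcomp, coeff_pcomp]
  exact Finset.sum_congr rfl fun m _ => by
    rw [coeff_pow_congr h m n le_rfl]

theorem coeff_pow_congr_deep {u v : PowerSeries k} {m : ℕ}
    (hu : coeff (R := k) 0 u = 0) (hv : coeff (R := k) 0 v = 0)
    (h : ∀ i < m, coeff (R := k) i u = coeff (R := k) i v) :
    ∀ (j i : ℕ), i < m + j → coeff (R := k) i (u ^ (j + 1)) = coeff (R := k) i (v ^ (j + 1)) := by
  intro j
  induction j with
  | zero => intro i hi; simpa using h i (by omega)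
  | succ j ih =>
    intro i hi
    rw [pow_succ' u (j+1), pow_succ' v (j+1), coeff_mul, coeff_mul]
    refine Finset.sum_congr rfl fun x hx => ?_
    rw [Finset.HasAntidiagonal.mem_antidiagonal] at hx
    rcases Nat.eq_zero_or_pos x.1 with h1 | h1
    · simp [h1, hu, hv]
    · have hb : x.2 < m + j := by omega
      rw [ih x.2 hb]
      by_cases ha : x.1 < m
      · rw [h x.1 ha]
      · have : x.2 < j + 1 := by omega
        rw [coeff_pow_eq_zero hv (j + 1) x.2 this, mul_zero, mul_zero]

theorem coeff_pow_congr_deep' {u v : PowerSeries k} {m : ℕ}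
    (hu : coeff (R := k) 0 u = 0) (hv : coeff (R := k) 0 v = 0)
    (h : ∀ i < m, coeff (R := k) i u = coeff (R := k) i v) {j : ℕ} (hj : 2 ≤ j) :
    coeff (R := k) m (u ^ j) = coeff (R := k) m (v ^ j) := by
  obtain ⟨j', rfl⟩ : ∃ j', j = j' + 2 := ⟨j - 2, by omega⟩
  exact coeff_pow_congr_deep hu hv h (j' + 1) m (by omega)

theorem triangle_sum (n : ℕ) (F : ℕ × ℕ → k) (hF : ∀ x : ℕ × ℕ, n < x.1 + x.2 → F x = 0) :
    ∑ m ∈ range (n + 1), ∑ x ∈ antidiagonal m, F x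
      = ∑ x ∈ range (n + 1) ×ˢ range (n + 1), F x := by
  rw [← Finset.sum_biUnion]
  · refine Finset.sum_subset ?_ ?_
    · intro x hx
      rw [Finset.mem_biUnion] at hx
      obtain ⟨m, hm, hx⟩ := hx
      rw [Finset.mem_range] at hm
      rw [Finset.HasAntidiagonal.mem_antidiagonal] at hx
      rw [Finset.mem_product, Finset.mem_range, Finset.mem_range]
      omega
    · intro x hx hx2
      apply hF
      by_contra hc
      push_neg at hc
      exact hx2 (Finset.mem_biUnion.2 ⟨x.1 + x.2, Finset.mem_range.2 (by omega),
        Finset.HasAntidiagonal.mem_antidiagonal.2 rfl⟩)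
  · intro a _ b _ hab
    simp only [Finset.disjoint_left]
    intro x hxa hxb
    rw [Finset.HasAntidiagonal.mem_antidiagonal] at hxa hxb
    exact hab (hxa ▸ hxb)

theorem pcomp_mul {h : PowerSeries k} (hh : coeff (R := k) 0 h = 0) (u v : PowerSeries k) :
    pcomp (u * v) h = pcomp u h * pcomp v h := by
  ext n
  have key : ∀ a b : ℕ, ∑ x ∈ antidiagonal n, coeff (R := k) x.1 (h ^ a) * coeff (R := k) x.2 (h ^ b)
      = coeff (R := k) n (h ^ (a + b)) := fun a b => by rw [pow_add, coeff_mul]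
  have lhs : coeff (R := k) n (pcomp (u * v) h)
      = ∑ x ∈ range (n + 1) ×ˢ range (n + 1),
          (coeff (R := k) x.1 u * coeff (R := k) x.2 v) * coeff (R := k) n (h ^ (x.1 + x.2)) := by
    rw [coeff_pcomp, ← triangle_sum n _ (fun x hx => by
      rw [coeff_pow_eq_zero hh _ _ hx, mul_zero])]
    refine Finset.sum_congr rfl fun m _ => ?_
    rw [PowerSeries.coeff_mul, Finset.sum_mul]
    refine Finset.sum_congr rfl fun x hx => ?_
    rw [Finset.HasAntidiagonal.mem_antidiagonal] at hx
    rw [hx]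
  have rhs : coeff (R := k) n (pcomp u h * pcomp v h)
      = ∑ x ∈ range (n + 1) ×ˢ range (n + 1),
          (coeff (R := k) x.1 u * coeff (R := k) x.2 v) * coeff (R := k) n (h ^ (x.1 + x.2)) := by
    rw [PowerSeries.coeff_mul]
    have step1 : ∀ x ∈ antidiagonal n,
        coeff (R := k) x.1 (pcomp u h) * coeff (R := k) x.2 (pcomp v h)
          = ∑ a ∈ range (n + 1), ∑ b ∈ range (n + 1),
              (coeff (R := k) a u * coeff (R := k) b v) * (coeff (R := k) x.1 (h ^ a) * coeff (R := k) x.2 (h ^ b)) := by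
      intro x hx
      rw [Finset.HasAntidiagonal.mem_antidiagonal] at hx
      rw [coeff_pcomp_ge hh u (show x.1 < n + 1 by omega),
        coeff_pcomp_ge hh v (show x.2 < n + 1 by omega), Finset.sum_mul_sum]
      exact Finset.sum_congr rfl fun a _ => Finset.sum_congr rfl fun b _ => by ring
    rw [Finset.sum_congr rfl step1, Finset.sum_comm]
    rw [Finset.sum_product]
    refine Finset.sum_congr rfl fun a _ => ?_
    rw [Finset.sum_comm]
    refine Finset.sum_congr rfl fun b _ => ?_
    rw [← Finset.mul_sum, key]
  rw [lhs, rhs]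

theorem pcomp_one (h : PowerSeries k) : pcomp 1 h = 1 := by
  ext n
  rw [coeff_pcomp]
  rw [Finset.sum_eq_single 0]
  · simp
  · intro m _ hm
    simp [PowerSeries.coeff_one, hm]
  · intro hn
    simp at hn

theorem pcomp_pow {h : PowerSeries k} (hh : coeff (R := k) 0 h = 0) (g : PowerSeries k) (j : ℕ) :
    pcomp (g ^ j) h = (pcomp g h) ^ j := by
  induction j with
  | zero => simpa using pcomp_one h
  | succ j ih => rw [pow_succ, pow_succ, pcomp_mul hh, ih]

theorem pcomp_X (f : PowerSeries k) : pcomp f X = f := by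
  ext n
  rw [coeff_pcomp]
  rw [Finset.sum_eq_single n]
  · simp
  · intro m _ hm
    rw [← pow_one (X : PowerSeries k), ← pow_mul, PowerSeries.coeff_X_pow,
      if_neg (by omega), mul_zero]
  · intro hn
    simp at hn

theorem X_pcomp {g : PowerSeries k} (hg : coeff (R := k) 0 g = 0) : pcomp X g = g := by
  ext n
  rw [coeff_pcomp]
  rw [Finset.sum_eq_single 1]
  · simp
  · intro m _ hm
    rw [PowerSeries.coeff_X, if_neg hm, zero_mul]
  · intro hn
    rw [Finset.mem_range, not_lt] at hn
    have : n = 0 := by omega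
    subst this
    simp [hg]

theorem pcomp_assoc (f : PowerSeries k) {g h : PowerSeries k}
    (hg : coeff (R := k) 0 g = 0) (hh : coeff (R := k) 0 h = 0) :
    pcomp (pcomp f g) h = pcomp f (pcomp g h) := by
  ext n
  rw [coeff_pcomp, coeff_pcomp]
  have rhs : ∀ j ∈ range (n + 1),
      coeff (R := k) j f * coeff (R := k) n ((pcomp g h) ^ j)
        = ∑ m ∈ range (n + 1), coeff (R := k) j f * (coeff (R := k) m (g ^ j) * coeff (R := k) n (h ^ m)) := by
    intro j _
    rw [← pcomp_pow hh, coeff_pcomp, Finset.mul_sum]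
  rw [Finset.sum_congr rfl rhs, Finset.sum_comm]
  refine Finset.sum_congr rfl fun m hm => ?_
  rw [Finset.mem_range] at hm
  rw [coeff_pcomp_ge hg f (show m < n + 1 by omega), Finset.sum_mul]
  refine Finset.sum_congr rfl fun j _ => by ring

noncomputable def approx (f : PowerSeries k) : ℕ → PowerSeries k
  | 0 => X
  | n + 1 => approx f n
      + PowerSeries.C (R := k) (- coeff (R := k) (n + 2) (pcomp f (approx f n))) * X ^ (n + 2)

theorem approx_coeff_zero (f : PowerSeries k) : ∀ n, coeff (R := k) 0 (approx f n) = 0 := by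
  intro n
  induction n with
  | zero => simp [approx]
  | succ n ih =>
    rw [approx, map_add, ih, coeff_C_mul, PowerSeries.coeff_X_pow, if_neg (by omega),
      mul_zero, add_zero]

theorem approx_stable (f : PowerSeries k) (n m : ℕ) (hm : m ≤ n + 1) :
    coeff (R := k) m (approx f (n + 1)) = coeff (R := k) m (approx f n) := by
  rw [approx, map_add, coeff_C_mul, PowerSeries.coeff_X_pow, if_neg (by omega),
    mul_zero, add_zero]

theorem approx_stable' (f : PowerSeries k) {n n' m : ℕ} (h : n ≤ n') (hm : m ≤ n + 1) :
    coeff (R := k) m (approx f n') = coeff (R := k) m (approx f n) := by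
  induction n' with
  | zero => rw [Nat.le_zero.mp h]
  | succ n' ih =>
    rcases Nat.lt_or_ge n (n' + 1) with h' | h'
    · rw [approx_stable f n' m (by omega), ih (by omega)]
    · rw [Nat.le_antisymm h h']

theorem approx_high (f : PowerSeries k) : ∀ n m, n + 2 ≤ m → coeff (R := k) m (approx f n) = 0 := by
  intro n
  induction n with
  | zero =>
    intro m hm
    rw [approx, PowerSeries.coeff_X, if_neg (by omega)]
  | succ n ih =>
    intro m hm
    rw [approx, map_add, ih m (by omega), coeff_C_mul, PowerSeries.coeff_X_pow,
      if_neg (by omega), mul_zero, add_zero]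

theorem approx_comp {f : PowerSeries k} (hf0 : coeff (R := k) 0 f = 0) (hf1 : coeff (R := k) 1 f = 1) :
    ∀ n m, m ≤ n + 1 → coeff (R := k) m (pcomp f (approx f n)) = coeff (R := k) m (X : PowerSeries k) := by
  intro n
  induction n with
  | zero =>
    intro m hm
    rw [show approx f 0 = X from rfl, pcomp_X]
    interval_cases m
    · simpa using hf0
    · simpa using hf1
  | succ n ih =>
    intro m hm
    set v := approx f n with hv
    set c := - coeff (R := k) (n + 2) (pcomp f v) with hc
    have hw : approx f (n + 1) = v + PowerSeries.C (R := k) c * X ^ (n + 2) := rfl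
    have hagree : ∀ i < n + 2, coeff (R := k) i (approx f (n + 1)) = coeff (R := k) i v := by
      intro i hi
      exact approx_stable f n i (by omega)
    rcases Nat.lt_or_ge m (n + 2) with hm' | hm'
    · rw [coeff_pcomp_congr (fun i hi => hagree i (by omega)) f]
      exact ih m (by omega)
    · have hm2 : m = n + 2 := by omega
      subst hm2
      have hw0 : coeff (R := k) 0 (approx f (n + 1)) = 0 := approx_coeff_zero f (n + 1)
      have hv0 : coeff (R := k) 0 v = 0 := approx_coeff_zero f n
      have hwtop : coeff (R := k) (n + 2) (approx f (n + 1)) = coeff (R := k) (n + 2) v + c := by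
        rw [hw, map_add, coeff_C_mul, PowerSeries.coeff_X_pow, if_pos rfl, mul_one]
      have main : ∀ j ∈ range (n + 3),
          coeff (R := k) j f * coeff (R := k) (n + 2) ((approx f (n + 1)) ^ j)
            = coeff (R := k) j f * coeff (R := k) (n + 2) (v ^ j) + (if j = 1 then c else 0) := by
        intro j _
        rcases j with _ | j
        · simp [hf0]
        rcases j with _ | j
        · rw [pow_one, pow_one, hf1, one_mul, one_mul, hwtop, if_pos rfl]
        · rw [coeff_pow_congr_deep' hw0 hv0 hagree (show 2 ≤ j + 2 by omega),
            if_neg (by omega), add_zero]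
      rw [coeff_pcomp, Finset.sum_congr rfl main, Finset.sum_add_distrib,
        Finset.sum_ite_eq' (range (n + 3)) 1 (fun _ => c),
        if_pos (Finset.mem_range.2 (by omega)), ← coeff_pcomp]
      rw [hc]
      simp [PowerSeries.coeff_X]

noncomputable def pinv (f : PowerSeries k) : PowerSeries k :=
  PowerSeries.mk fun m => coeff (R := k) m (approx f m)

theorem coeff_pinv (f : PowerSeries k) {n m : ℕ} (hm : m ≤ n + 1) :
    coeff (R := k) m (pinv f) = coeff (R := k) m (approx f n) := by
  rw [pinv, coeff_mk]
  rw [← approx_stable' f (le_max_left m n) (by omega : m ≤ m + 1),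
    approx_stable' f (le_max_right m n) hm]

theorem pinv_coeff_zero (f : PowerSeries k) : coeff (R := k) 0 (pinv f) = 0 := by
  rw [coeff_pinv f (show 0 ≤ 0 + 1 by omega)]
  exact approx_coeff_zero f 0

theorem pinv_coeff_one (f : PowerSeries k) : coeff (R := k) 1 (pinv f) = 1 := by
  rw [coeff_pinv f (show 1 ≤ 0 + 1 by omega)]
  simp [approx]

theorem pcomp_pinv {f : PowerSeries k} (hf0 : coeff (R := k) 0 f = 0) (hf1 : coeff (R := k) 1 f = 1) :
    pcomp f (pinv f) = X := by
  ext m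
  rw [coeff_pcomp_congr (fun i hi => coeff_pinv f (show i ≤ m + 1 by omega)) f]
  exact approx_comp hf0 hf1 m m (by omega)

theorem approx_qsupp {q : ℕ} (hq : 2 ≤ q) {f : PowerSeries k}
    (hf : ∀ m, m % q ≠ 1 → coeff (R := k) m f = 0) :
    ∀ n m, m % q ≠ 1 → coeff (R := k) m (approx f n) = 0 := by
  intro n
  induction n with
  | zero =>
    intro m hm
    rw [approx, PowerSeries.coeff_X, if_neg (fun h => by subst h; exact hm (Nat.mod_eq_of_lt (by omega)))]
  | succ n ih =>
    intro m hm
    rw [approx, map_add, ih m hm, coeff_C_mul, PowerSeries.coeff_X_pow, zero_add]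
    by_cases h : m = n + 2
    · subst h
      rw [if_pos rfl, mul_one, neg_eq_zero, coeff_pcomp]
      refine Finset.sum_eq_zero fun j _ => ?_
      by_cases hj : j % q = 1
      · rw [qsupp_pow hq ih j (n + 2) (by rw [hj]; exact hm), mul_zero]
      · rw [hf j hj, zero_mul]
    · rw [if_neg h, mul_zero]

theorem pinv_qsupp {q : ℕ} (hq : 2 ≤ q) {f : PowerSeries k}
    (hf : ∀ m, m % q ≠ 1 → coeff (R := k) m f = 0) :
    ∀ m, m % q ≠ 1 → coeff (R := k) m (pinv f) = 0 := by
  intro m hm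
  rw [coeff_pinv f (show m ≤ m + 1 by omega)]
  exact approx_qsupp hq hf m m hm


theorem modq_iff {q m : ℕ} (hq : 2 ≤ q) (hm : 1 ≤ m) : m % q = 1 ↔ q ∣ (m - 1) := by
  constructor
  · intro h
    have e : m = q * (m / q) + 1 := by
      conv_lhs => rw [← Nat.div_add_mod m q, h]
    exact ⟨m / q, Nat.sub_eq_of_eq_add e⟩
  · rintro ⟨t, ht⟩
    have hm' : m = q * t + 1 := by
      have := Nat.eq_add_of_sub_eq hm ht
      omega
    rw [hm', Nat.mul_add_mod q t 1, Nat.mod_eq_of_lt (by omega)]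

theorem stmt10 (p : ℕ) [Fact p.Prime] (r : ℕ) (hr : 1 ≤ r) (q : ℕ) (hq : q = p ^ r) :
    (∀ f g : PowerSeries (ZMod p), InT q f → InT q g → InT q (pcomp f g)) ∧
    (∀ f : PowerSeries (ZMod p), InT q f →
      ∃ g : PowerSeries (ZMod p), InT q g ∧
        pcomp f g = PowerSeries.X ∧ pcomp g f = PowerSeries.X) := by
  have hq2 : 2 ≤ q := by
    subst hq
    calc 2 ≤ p := (Fact.out : p.Prime).two_le
    _ ≤ p ^ r := Nat.le_self_pow (by omega) p
  have hzq : (0 : ℕ) % q ≠ 1 := by rw [Nat.zero_mod]; omega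
  have char : ∀ f : PowerSeries (ZMod p), InT q f ↔
      (coeff (R := ZMod p) 1 f = 1 ∧ ∀ m, m % q ≠ 1 → coeff (R := ZMod p) m f = 0) := by
    intro f
    constructor
    · rintro ⟨h0, h1, h2⟩
      refine ⟨h1, fun m hm => ?_⟩
      match m, hm with
      | 0, _ => exact h0
      | 1, hm => exact absurd (Nat.mod_eq_of_lt (by omega)) hm
      | (m+2), hm =>
        exact h2 (m+2) (by omega) (fun hd => hm ((modq_iff hq2 (by omega)).2 hd))
    · rintro ⟨h1, hs⟩
      exact ⟨hs 0 hzq, h1,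
        fun m hm2 hd => hs m (fun h => hd ((modq_iff hq2 (by omega)).1 h))⟩
  constructor
  · intro f g hf hg
    obtain ⟨hf1, hfs⟩ := (char f).1 hf
    obtain ⟨hg1, hgs⟩ := (char g).1 hg
    have hf0 : coeff (R := ZMod p) 0 f = 0 := hfs 0 hzq
    refine (char _).2 ⟨?_, ?_⟩
    · rw [coeff_pcomp, Finset.sum_range_succ, Finset.sum_range_succ,
        Finset.sum_range_zero]
      simp [hf0, hf1, hg1]
    · intro m hm
      rw [coeff_pcomp]
      refine Finset.sum_eq_zero fun j _ => ?_
      by_cases hj : j % q = 1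
      · rw [qsupp_pow hq2 hgs j m (by rw [hj]; exact hm), mul_zero]
      · rw [hfs j hj, zero_mul]
  · intro f hf
    obtain ⟨hf1, hfs⟩ := (char f).1 hf
    have hf0 : coeff (R := ZMod p) 0 f = 0 := hfs 0 hzq
    refine ⟨pinv f, (char _).2 ⟨pinv_coeff_one f, pinv_qsupp hq2 hfs⟩,
      pcomp_pinv hf0 hf1, ?_⟩
    set g := pinv f with hgdef
    have hg0 : coeff (R := ZMod p) 0 g = 0 := pinv_coeff_zero f
    have hg1 : coeff (R := ZMod p) 1 g = 1 := pinv_coeff_one f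
    set h := pinv g with hhdef
    have hh0 : coeff (R := ZMod p) 0 h = 0 := pinv_coeff_zero g
    have hgh : pcomp g h = PowerSeries.X := pcomp_pinv hg0 hg1
    have hfh : f = h := by
      calc f = pcomp f PowerSeries.X := (pcomp_X f).symm
      _ = pcomp f (pcomp g h) := by rw [hgh]
      _ = pcomp (pcomp f g) h := (pcomp_assoc f hg0 hh0).symm
      _ = pcomp PowerSeries.X h := by rw [pcomp_pinv hf0 hf1]
      _ = h := X_pcomp hh0
    rw [hfh, hgh]
end

section
/- Let $q = p^r$, $r \geq 1$, and let $T = \{t + \sum_{i\geq1} a_i t^{1+qi} : a_i \in \mathbb{F}_p\}$ be the corresponding subgroup of the Nottingham group over $\mathbb{F}_p$, with filtration $T_i = \{f \in T : f(t) \equiv t \bmod t^{1+qi}\}$. Then the commutator subgroup satisfies $[T_i, T_i] \subseteq T_{(q+1)i+1}$ for every $i \geq 1$. -/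
open PowerSeries

namespace PcompAux
variable {k : Type} [CommRing k]

theorem coeff_pcomp (f g : k⟦X⟧) (n : ℕ) :
    coeff (R := k) n (pcomp f g) = coeff (R := k) n (Polynomial.eval₂ (C (R := k)) g (trunc (n + 1) f)) := by
  simp [pcomp]

theorem X_pow_dvd_sub_trunc (f : k⟦X⟧) (M : ℕ) :
    (X : k⟦X⟧) ^ M ∣ f - ↑(trunc M f) := by
  rw [X_pow_dvd_iff]
  intro m hm
  simp [Polynomial.coeff_coe, coeff_trunc, hm]

theorem coeff_C_mul_pow_eq_zero {g : k⟦X⟧} (hg : coeff (R := k) 0 g = 0) {n m : ℕ} (h : n < m)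
    (c : k) : coeff (R := k) n (C (R := k) c * g ^ m) = 0 := by
  have hX : (X : k⟦X⟧) ∣ g := by
    rw [X_dvd_iff, ← coeff_zero_eq_constantCoeff_apply]; exact hg
  have : (X : k⟦X⟧) ^ m ∣ C (R := k) c * g ^ m := Dvd.dvd.mul_left (pow_dvd_pow_of_dvd hX m) _
  rw [X_pow_dvd_iff] at this
  exact this n h

theorem coeff_eval₂_eq_zero {g : k⟦X⟧} (hg : coeff (R := k) 0 g = 0) {n : ℕ} {R : Polynomial k}
    (hR : ∀ m ≤ n, R.coeff m = 0) : coeff (R := k) n (Polynomial.eval₂ (C (R := k)) g R) = 0 := by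
  rw [Polynomial.eval₂_eq_sum, Polynomial.sum, map_sum]
  apply Finset.sum_eq_zero
  intro m hm
  rcases lt_or_ge n m with h | h
  · exact coeff_C_mul_pow_eq_zero hg h _
  · simp [hR m h]

theorem pcomp_coe {g : k⟦X⟧} (hg : coeff (R := k) 0 g = 0) (R : Polynomial k) :
    pcomp (↑R) g = Polynomial.eval₂ (C (R := k)) g R := by
  ext n
  rw [coeff_pcomp]
  have : R = trunc (n+1) ↑R + (R - trunc (n+1) ↑R) := by ring
  conv_rhs => rw [this]
  rw [Polynomial.eval₂_add, map_add]
  have h0 : coeff (R := k) n (Polynomial.eval₂ (C (R := k)) g (R - trunc (n+1) ↑R)) = 0 := by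
    apply coeff_eval₂_eq_zero hg
    intro m hm
    simp [coeff_trunc, Polynomial.coeff_coe, Nat.lt_succ_of_le hm]
  rw [h0, add_zero]

theorem X_pow_dvd_pcomp {g : k⟦X⟧} (hg : coeff (R := k) 0 g = 0) {M : ℕ} {u : k⟦X⟧}
    (hu : (X : k⟦X⟧) ^ M ∣ u) : (X : k⟦X⟧) ^ M ∣ pcomp u g := by
  rw [X_pow_dvd_iff] at hu ⊢
  intro n hn
  rw [coeff_pcomp]
  apply coeff_eval₂_eq_zero hg
  intro m hm
  rw [coeff_trunc]
  split
  · exact hu m (lt_of_le_of_lt hm hn)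
  · rfl

theorem pcomp_add (u v g : k⟦X⟧) : pcomp (u + v) g = pcomp u g + pcomp v g := by
  ext n
  simp [coeff_pcomp, map_add, Polynomial.eval₂_add]

theorem pcomp_sub (u v g : k⟦X⟧) : pcomp (u - v) g = pcomp u g - pcomp v g := by
  have h := pcomp_add (u - v) v g
  rw [sub_add_cancel] at h
  rw [h]; ring

theorem pcomp_congr {g : k⟦X⟧} (hg : coeff (R := k) 0 g = 0) {M : ℕ} {u v : k⟦X⟧}
    (h : (X : k⟦X⟧) ^ M ∣ u - v) : (X : k⟦X⟧) ^ M ∣ pcomp u g - pcomp v g := by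
  rw [← pcomp_sub]
  exact X_pow_dvd_pcomp hg h

theorem coeff_pcomp_trunc {g : k⟦X⟧} (hg : coeff (R := k) 0 g = 0) {n M : ℕ} (h : n < M) (u : k⟦X⟧) :
    coeff (R := k) n (pcomp u g) = coeff (R := k) n (Polynomial.eval₂ (C (R := k)) g (trunc M u)) := by
  rw [← pcomp_coe hg]
  have hd := pcomp_congr hg (X_pow_dvd_sub_trunc u M) (g := g)
  rw [X_pow_dvd_iff] at hd
  have := hd n h
  rw [map_sub, sub_eq_zero] at this
  exact this

theorem pcomp_mul {g : k⟦X⟧} (hg : coeff (R := k) 0 g = 0) (u v : k⟦X⟧) :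
    pcomp (u * v) g = pcomp u g * pcomp v g := by
  ext n
  set M := n + 1 with hM
  have hUV : (X : k⟦X⟧) ^ M ∣ u * v - ↑(trunc M u * trunc M v) := by
    push_cast
    have : u * v - ↑(trunc M u) * ↑(trunc M v)
        = u * (v - ↑(trunc M v)) + (u - ↑(trunc M u)) * ↑(trunc M v) := by ring
    rw [this]
    exact dvd_add (Dvd.dvd.mul_left (X_pow_dvd_sub_trunc v M) u)
      (Dvd.dvd.mul_right (X_pow_dvd_sub_trunc u M) _)
  have h1 : coeff (R := k) n (pcomp (u*v) g) = coeff (R := k) n (pcomp (↑(trunc M u * trunc M v)) g) := by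
    have := pcomp_congr hg hUV (g := g)
    rw [X_pow_dvd_iff] at this
    have h := this n (by omega)
    rw [map_sub, sub_eq_zero] at h
    exact h
  have h2 : coeff (R := k) n (pcomp u g * pcomp v g)
      = coeff (R := k) n (pcomp (↑(trunc M u) : k⟦X⟧) g * pcomp (↑(trunc M v) : k⟦X⟧) g) := by
    have hd : (X : k⟦X⟧) ^ M ∣ pcomp u g * pcomp v g
        - pcomp (↑(trunc M u) : k⟦X⟧) g * pcomp (↑(trunc M v) : k⟦X⟧) g := by
      have : pcomp u g * pcomp v g
          - pcomp (↑(trunc M u) : k⟦X⟧) g * pcomp (↑(trunc M v) : k⟦X⟧) g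
          = pcomp u g * (pcomp v g - pcomp (↑(trunc M v) : k⟦X⟧) g)
            + (pcomp u g - pcomp (↑(trunc M u) : k⟦X⟧) g) * pcomp (↑(trunc M v) : k⟦X⟧) g := by
        ring
      rw [this]
      exact dvd_add (Dvd.dvd.mul_left (pcomp_congr hg (X_pow_dvd_sub_trunc v M)) _)
        (Dvd.dvd.mul_right (pcomp_congr hg (X_pow_dvd_sub_trunc u M)) _)
    rw [X_pow_dvd_iff] at hd
    have h := hd n (by omega)
    rw [map_sub, sub_eq_zero] at h
    exact h
  rw [h1, h2, pcomp_coe hg, pcomp_coe hg, pcomp_coe hg, Polynomial.eval₂_mul]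

theorem pcomp_X {g : k⟦X⟧} (hg : coeff (R := k) 0 g = 0) : pcomp X g = g := by
  rw [← Polynomial.coe_X, pcomp_coe hg, Polynomial.eval₂_X]

theorem pcomp_C {g : k⟦X⟧} (hg : coeff (R := k) 0 g = 0) (c : k) : pcomp (C (R := k) c) g = C (R := k) c := by
  rw [← Polynomial.coe_C, pcomp_coe hg, Polynomial.eval₂_C, Polynomial.coe_C]

theorem pcomp_one {g : k⟦X⟧} (hg : coeff (R := k) 0 g = 0) : pcomp 1 g = 1 := by
  have := pcomp_C hg 1
  simpa using this

theorem pcomp_pow {g : k⟦X⟧} (hg : coeff (R := k) 0 g = 0) (u : k⟦X⟧) (m : ℕ) :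
    pcomp (u ^ m) g = (pcomp u g) ^ m := by
  induction m with
  | zero => simpa using pcomp_one hg
  | succ m ih => rw [pow_succ, pow_succ, pcomp_mul hg, ih]

theorem coeff_zero_pcomp {g : k⟦X⟧} (hg : coeff (R := k) 0 g = 0) {u : k⟦X⟧}
    (hu : coeff (R := k) 0 u = 0) : coeff (R := k) 0 (pcomp u g) = 0 := by
  have hX : (X : k⟦X⟧) ∣ u := by rw [X_dvd_iff, ← coeff_zero_eq_constantCoeff_apply]; exact hu
  have := X_pow_dvd_pcomp hg (M := 1) (by simpa using hX)
  rw [X_pow_dvd_iff] at this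
  simpa using this 0 (by omega)

theorem pcomp_assoc {g h : k⟦X⟧} (hg : coeff (R := k) 0 g = 0) (hh : coeff (R := k) 0 h = 0) (u : k⟦X⟧) :
    pcomp (pcomp u g) h = pcomp u (pcomp g h) := by
  have hgh : coeff (R := k) 0 (pcomp g h) = 0 := coeff_zero_pcomp hh hg
  ext n
  set M := n + 1 with hM
  have key : ∀ R : Polynomial k,
      pcomp (Polynomial.eval₂ (C (R := k)) g R) h = Polynomial.eval₂ (C (R := k)) (pcomp g h) R := by
    intro R
    induction R using Polynomial.induction_on' with
    | add p q hp hq => rw [Polynomial.eval₂_add, pcomp_add, hp, hq, Polynomial.eval₂_add]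
    | monomial m c =>
        rw [Polynomial.eval₂_monomial, Polynomial.eval₂_monomial,
          pcomp_mul hh, pcomp_C hh, pcomp_pow hh]
  have h1 : coeff (R := k) n (pcomp (pcomp u g) h)
      = coeff (R := k) n (pcomp (pcomp (↑(trunc M u) : k⟦X⟧) g) h) := by
    have hd := pcomp_congr hh (pcomp_congr hg (X_pow_dvd_sub_trunc u M) (g := g)) (g := h)
    rw [X_pow_dvd_iff] at hd
    have := hd n (by omega)
    rw [map_sub, sub_eq_zero] at this
    exact this
  have h2 : coeff (R := k) n (pcomp u (pcomp g h))
      = coeff (R := k) n (pcomp (↑(trunc M u) : k⟦X⟧) (pcomp g h)) := by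
    have hd := pcomp_congr hgh (X_pow_dvd_sub_trunc u M) (g := pcomp g h)
    rw [X_pow_dvd_iff] at hd
    have := hd n (by omega)
    rw [map_sub, sub_eq_zero] at this
    exact this
  rw [h1, h2, pcomp_coe hg, key, pcomp_coe hgh]

theorem pcomp_X_right (u : k⟦X⟧) : pcomp u X = u := by
  ext n
  rw [coeff_pcomp]
  have : Polynomial.eval₂ (C (R := k)) (X : k⟦X⟧) (trunc (n+1) u) = ↑(trunc (n+1) u) := by
    induction (trunc (n+1) u) using Polynomial.induction_on' with
    | add p q hp hq => rw [Polynomial.eval₂_add, hp, hq, Polynomial.coe_add]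
    | monomial m c =>
        rw [Polynomial.eval₂_monomial, Polynomial.coe_monomial]
        ext j
        simp [coeff_X_pow, coeff_monomial, eq_comm]
  rw [this]
  simp [Polynomial.coeff_coe, coeff_trunc]

end PcompAux

section Stage2
variable {k : Type} [CommRing k]

theorem coeff_eval₂_X_pow {q : ℕ} (hq : 0 < q) (Q : Polynomial k) (n : ℕ) :
    coeff (R := k) n (Polynomial.eval₂ (C (R := k)) ((X : k⟦X⟧) ^ q) Q)
      = if q ∣ n then Q.coeff (n / q) else 0 := by
  rw [Polynomial.eval₂_eq_sum, Polynomial.sum, map_sum]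
  have hterm : ∀ m, coeff (R := k) n (C (R := k) (Q.coeff m) * ((X : k⟦X⟧)^q)^m)
      = if q * m = n then Q.coeff m else 0 := by
    intro m
    rw [← pow_mul, coeff_C_mul, coeff_X_pow]
    split <;> simp_all [eq_comm]
  by_cases hqn : q ∣ n
  · rw [Finset.sum_eq_single (n / q)]
    · rw [hterm, if_pos (Nat.mul_div_cancel' hqn), if_pos hqn]
    · intro m _ hm
      rw [hterm, if_neg]
      intro h
      exact hm (by rw [← h, Nat.mul_div_cancel_left _ hq])
    · intro hmem
      rw [hterm, if_pos (Nat.mul_div_cancel' hqn)]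
      exact Polynomial.notMem_support_iff.mp hmem
  · rw [if_neg hqn]
    apply Finset.sum_eq_zero
    intro m _
    rw [hterm, if_neg]
    intro h
    exact hqn ⟨m, h.symm⟩

instance charP_powerSeries (p : ℕ) [CharP k p] : CharP (k⟦X⟧) p := by
  constructor
  intro n
  rw [← map_natCast (C (R := k)) n]
  constructor
  · intro h
    have := congrArg (constantCoeff (R := k)) h
    simp only [constantCoeff_C, map_zero] at this
    exact (CharP.cast_eq_zero_iff k p n).mp this
  · intro h
    rw [(CharP.cast_eq_zero_iff k p n).mpr h, map_zero]

theorem coeff_pow_p {p : ℕ} [Fact p.Prime] (u : (ZMod p)⟦X⟧) (n : ℕ) :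
    coeff (R := ZMod p) n (u ^ p) = if p ∣ n then coeff (R := ZMod p) (n / p) u else 0 := by
  set U := trunc (n + 1) u with hU
  have hdvd : (X : (ZMod p)⟦X⟧) ^ (n+1) ∣ u ^ p - (↑U) ^ p :=
    dvd_trans (by rw [X_pow_dvd_iff]; intro m hm; simp [hU, Polynomial.coeff_coe, coeff_trunc, hm])
      (sub_dvd_pow_sub_pow u (↑U) p)
  rw [X_pow_dvd_iff] at hdvd
  have h1 : coeff (R := ZMod p) n (u ^ p) = coeff (R := ZMod p) n ((↑U : (ZMod p)⟦X⟧) ^ p) := by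
    have := hdvd n (by omega)
    rw [map_sub, sub_eq_zero] at this
    exact this
  have h2 : U ^ p = Polynomial.expand (ZMod p) p U := by
    have := Polynomial.map_frobenius_expand p U
    rw [ZMod.frobenius_zmod, Polynomial.map_id] at this
    exact this.symm
  rw [h1, ← Polynomial.coe_pow, h2]
  rw [Polynomial.coeff_coe, Polynomial.coeff_expand (Fact.out : p.Prime).pos]
  split
  · rw [coeff_trunc, if_pos (Nat.lt_succ_of_le (Nat.div_le_self n p))]
  · rfl

theorem coeff_pow_q {p : ℕ} [Fact p.Prime] (r : ℕ) (u : (ZMod p)⟦X⟧) (n : ℕ) :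
    coeff (R := ZMod p) n (u ^ (p ^ r)) = if p ^ r ∣ n then coeff (R := ZMod p) (n / p ^ r) u else 0 := by
  induction r generalizing n with
  | zero => simp
  | succ r ih =>
      have hp : 0 < p := (Fact.out : p.Prime).pos
      rw [pow_succ, pow_mul, coeff_pow_p]
      by_cases h1 : p ∣ n
      · rw [if_pos h1, ih]
        have hiff : p ^ r ∣ n / p ↔ p ^ r * p ∣ n := by
          rw [Nat.dvd_div_iff_mul_dvd h1, mul_comm]
        by_cases h2 : p ^ r ∣ n / p
        · rw [if_pos h2, if_pos (hiff.mp h2), Nat.div_div_eq_div_mul, mul_comm]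
        · rw [if_neg h2, if_neg (fun hc => h2 (hiff.mpr hc))]
      · rw [if_neg h1, if_neg]
        intro hc
        exact h1 (Dvd.dvd.trans (dvd_mul_left p (p ^ r)) hc)

theorem nat_mod_one_iff {q : ℕ} (hq : 2 ≤ q) (m : ℕ) : (m + 1) % q = 1 ↔ q ∣ m := by
  constructor
  · intro h
    have := Nat.dvd_sub_mod (n := q) (m + 1)
    rw [h] at this
    simpa using this
  · rintro ⟨c, rfl⟩
    rw [Nat.mul_add_mod, Nat.mod_eq_of_lt hq]

end Stage2

section Stage3
variable {k : Type} [CommRing k]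

/-- support contained in multiples of q -/
def S0 {k : Type} [CommRing k] (q : ℕ) (u : k⟦X⟧) : Prop :=
  ∀ n, ¬ q ∣ n → coeff (R := k) n u = 0

/-- support contained in 1 + multiples of q -/
def S1 {k : Type} [CommRing k] (q : ℕ) (u : k⟦X⟧) : Prop :=
  ∀ n, n % q ≠ 1 → coeff (R := k) n u = 0

theorem S0_mul {q : ℕ} {u v : k⟦X⟧} (hu : S0 q u) (hv : S0 q v) : S0 q (u * v) := by
  intro n hn
  rw [coeff_mul]
  apply Finset.sum_eq_zero
  rintro ⟨x, y⟩ hxy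
  rw [Finset.HasAntidiagonal.mem_antidiagonal] at hxy
  by_cases hx : q ∣ x
  · have hy : ¬ q ∣ y := fun hy => hn (hxy ▸ dvd_add hx hy)
    rw [hv y hy, mul_zero]
  · rw [hu x hx, zero_mul]

theorem S0_one {q : ℕ} : S0 q (1 : k⟦X⟧) := by
  intro n hn
  rw [coeff_one, if_neg]
  rintro rfl
  exact hn (dvd_zero q)

theorem S0_pow {q : ℕ} {u : k⟦X⟧} (hu : S0 q u) (s : ℕ) : S0 q (u ^ s) := by
  induction s with
  | zero => simpa using S0_one
  | succ s ih => rw [pow_succ]; exact S0_mul ih hu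

theorem S0_mul_S1 {q : ℕ} (hq : 2 ≤ q) {u v : k⟦X⟧} (hu : S0 q u) (hv : S1 q v) :
    S1 q (u * v) := by
  intro n hn
  rw [coeff_mul]
  apply Finset.sum_eq_zero
  rintro ⟨x, y⟩ hxy
  rw [Finset.HasAntidiagonal.mem_antidiagonal] at hxy
  by_cases hx : q ∣ x
  · have hy : y % q ≠ 1 := by
      intro hy1
      apply hn
      obtain ⟨t, rfl⟩ := hx
      rw [← hxy, add_comm, Nat.add_mul_mod_self_left, hy1]
    rw [hv y hy, mul_zero]
  · rw [hu x hx, zero_mul]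

theorem S1_X {q : ℕ} (hq : 2 ≤ q) : S1 q (X : k⟦X⟧) := by
  intro n hn
  rw [coeff_X, if_neg]
  rintro rfl
  exact hn (Nat.mod_eq_of_lt hq)

theorem S0_pow_q {p : ℕ} [Fact p.Prime] (r : ℕ) (v : (ZMod p)⟦X⟧) : S0 (p^r) (v ^ p ^ r) := by
  intro n hn
  rw [coeff_pow_q, if_neg hn]

theorem S1_pcomp {p : ℕ} [Fact p.Prime] {r : ℕ} {q : ℕ} (hqr : q = p ^ r) (hq : 2 ≤ q)
    {u v : (ZMod p)⟦X⟧} (hu : S1 q u) (hv : S1 q v) : S1 q (pcomp u v) := by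
  have hv0 : coeff (R := ZMod p) 0 v = 0 := hv 0 (by rw [Nat.zero_mod]; omega)
  intro n hn
  rw [PcompAux.coeff_pcomp, Polynomial.eval₂_eq_sum, Polynomial.sum, map_sum]
  apply Finset.sum_eq_zero
  intro m hm
  have hmq : m % q = 1 := by
    by_contra hne
    apply Polynomial.mem_support_iff.mp hm
    rw [coeff_trunc]
    split
    · exact hu m hne
    · rfl
  have hm1 : m = q * (m / q) + 1 := by
    conv_lhs => rw [← Nat.div_add_mod m q, hmq]
  have hvm : S1 q (v ^ m) := by
    rw [hm1, pow_succ, pow_mul]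
    exact S0_mul_S1 hq (S0_pow (hqr ▸ S0_pow_q r v) _) hv
  rw [coeff_C_mul, hvm n hn, mul_zero]

theorem S1_inv {p : ℕ} [Fact p.Prime] {r : ℕ} {q : ℕ} (hqr : q = p ^ r) (hq : 2 ≤ q)
    {u v : (ZMod p)⟦X⟧} (hu : S1 q u) (hu1 : coeff (R := ZMod p) 1 u = 1)
    (hv0 : coeff (R := ZMod p) 0 v = 0) (huv : pcomp u v = X) : S1 q v := by
  intro n
  induction n using Nat.strong_induction_on with
  | _ n IH =>
  intro hn
  rcases Nat.eq_zero_or_pos n with rfl | hnpos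
  · exact hv0
  have hn1 : n ≠ 1 := by
    rintro rfl
    exact hn (Nat.mod_eq_of_lt hq)
  have hX : coeff (R := ZMod p) n (pcomp u v) = 0 := by
    rw [huv, coeff_X, if_neg hn1]
  rw [PcompAux.coeff_pcomp, Polynomial.eval₂_eq_sum, Polynomial.sum, map_sum] at hX
  have hsum : ∀ m ∈ (trunc (n+1) u).support, m ≠ 1 →
      coeff (R := ZMod p) n (C (R := ZMod p) ((trunc (n+1) u).coeff m) * v ^ m) = 0 := by
    intro m hm hm1
    have hmq : m % q = 1 := by
      by_contra hne
      apply Polynomial.mem_support_iff.mp hm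
      rw [coeff_trunc]
      split
      · exact hu m hne
      · rfl
    obtain ⟨s, hms⟩ : ∃ s, m = q * s + 1 :=
      ⟨m / q, by conv_lhs => rw [← Nat.div_add_mod m q, hmq]⟩
    have hs1 : 1 ≤ s := by
      rcases Nat.eq_zero_or_pos s with hs0 | h
      · subst hs0; simp at hms; exact absurd hms hm1
      · exact h
    rw [coeff_C_mul, hms, pow_succ, pow_mul, coeff_mul]
    rw [Finset.sum_eq_zero, mul_zero]
    rintro ⟨y, x⟩ hxy
    rw [Finset.HasAntidiagonal.mem_antidiagonal] at hxy
    rcases Nat.eq_zero_or_pos y with rfl | hypos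
    · have : constantCoeff (R := ZMod p) ((v ^ q) ^ s) = 0 := by
        rw [map_pow, map_pow]
        rw [← coeff_zero_eq_constantCoeff_apply, hv0]
        rw [zero_pow (by omega), zero_pow (by omega)]
      rw [coeff_zero_eq_constantCoeff_apply, this, zero_mul]
    by_cases hqy : q ∣ y
    · have hx : x % q ≠ 1 := by
        obtain ⟨t, rfl⟩ := hqy
        rw [← hxy, add_comm, Nat.add_mul_mod_self_left] at hn
        exact hn
      have hxn : x < n := by omega
      rw [IH x hxn hx, mul_zero]
    · rw [S0_pow (hqr ▸ S0_pow_q r v) s y hqy, zero_mul]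
  have h1mem : (1 : ℕ) ∈ (trunc (n+1) u).support := by
    rw [Polynomial.mem_support_iff, coeff_trunc, if_pos (by omega)]
    rw [hu1]
    exact one_ne_zero
  rw [Finset.sum_eq_single 1 hsum (fun h => absurd h1mem h)] at hX
  rw [coeff_C_mul, coeff_trunc, if_pos (by omega), hu1, one_mul, pow_one] at hX
  exact hX
end Stage3

section Stage4
variable {k : Type} [CommRing k]

theorem coeff_eq_zero_of_X_pow_dvd {M n : ℕ} {w : k⟦X⟧} (h : (X : k⟦X⟧) ^ M ∣ w)
    (hn : n < M) : coeff (R := k) n w = 0 := (X_pow_dvd_iff.mp h) n hn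

theorem X_pow_dvd_of_coeff_eq_zero {M : ℕ} {w : k⟦X⟧} (h : ∀ n < M, coeff (R := k) n w = 0) :
    (X : k⟦X⟧) ^ M ∣ w := X_pow_dvd_iff.mpr h

theorem X_pow_dvd_mono {m n : ℕ} {w : k⟦X⟧} (hmn : m ≤ n) (h : (X : k⟦X⟧) ^ n ∣ w) :
    (X : k⟦X⟧) ^ m ∣ w := dvd_trans (pow_dvd_pow X hmn) h

theorem X_cancel {M : ℕ} {w : k⟦X⟧} (h : (X : k⟦X⟧) ^ (M + 1) ∣ X * w) :
    (X : k⟦X⟧) ^ M ∣ w := by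
  apply X_pow_dvd_of_coeff_eq_zero
  intro n hn
  rw [← coeff_succ_X_mul]
  exact coeff_eq_zero_of_X_pow_dvd h (by omega)

theorem coeff_pcomp_X_pow {q : ℕ} (hq : 0 < q) (w : k⟦X⟧) (n : ℕ) :
    coeff (R := k) n (pcomp w ((X : k⟦X⟧) ^ q)) = if q ∣ n then coeff (R := k) (n / q) w else 0 := by
  have hX0 : coeff (R := k) 0 ((X : k⟦X⟧) ^ q) = 0 := by
    rw [coeff_X_pow, if_neg (by omega)]
  rw [PcompAux.coeff_pcomp_trunc hX0 (Nat.lt_succ_self n), coeff_eval₂_X_pow hq]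
  split
  · rw [coeff_trunc, if_pos (Nat.lt_succ_of_le (Nat.div_le_self n q))]
  · rfl

theorem S1_structure {q : ℕ} (hq : 2 ≤ q) {a : k⟦X⟧} (ha : S1 q a) :
    a = X * pcomp (PowerSeries.mk fun j => coeff (R := k) (1 + q * j) a) ((X : k⟦X⟧) ^ q) := by
  ext n
  cases n with
  | zero =>
      rw [ha 0 (by rw [Nat.zero_mod]; omega)]
      rw [coeff_zero_eq_constantCoeff_apply, map_mul, constantCoeff_X, zero_mul]
  | succ m =>
      rw [coeff_succ_X_mul, coeff_pcomp_X_pow (by omega)]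
      by_cases hd : q ∣ m
      · rw [if_pos hd, coeff_mk, Nat.mul_div_cancel' hd, Nat.add_comm]
      · rw [if_neg hd, ha (m+1) (fun hc => hd ((nat_mod_one_iff hq m).mp hc))]

theorem pcomp_a_eq {q : ℕ} (hq : 2 ≤ q) {a g : k⟦X⟧} (ha : S1 q a)
    (hg0 : coeff (R := k) 0 g = 0) :
    pcomp a g = g * pcomp (PowerSeries.mk fun j => coeff (R := k) (1 + q * j) a) (g ^ q) := by
  conv_lhs => rw [S1_structure hq ha]
  rw [PcompAux.pcomp_mul hg0, PcompAux.pcomp_X hg0,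
    PcompAux.pcomp_assoc (by rw [coeff_X_pow, if_neg (by omega)]) hg0,
    PcompAux.pcomp_pow hg0, PcompAux.pcomp_X hg0]

end Stage4

section Stage5
variable {k : Type} [CommRing k]

noncomputable def PolA {k : Type} [CommRing k] (q N : ℕ) (a : k⟦X⟧) : Polynomial k :=
  trunc N (PowerSeries.mk fun j => coeff (R := k) (1 + q * j) a)

noncomputable def uuA {k : Type} [CommRing k] (q N : ℕ) (a : k⟦X⟧) : k⟦X⟧ :=
  Polynomial.eval₂ (C (R := k)) ((X : k⟦X⟧) ^ q) (PolA q N a)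

noncomputable def vvA {k : Type} [CommRing k] (q N : ℕ) (a : k⟦X⟧) : k⟦X⟧ :=
  Polynomial.eval₂ (C (R := k)) ((X : k⟦X⟧) ^ q) (Polynomial.derivative (PolA q N a))

theorem coeff_PolA {q N : ℕ} (a : k⟦X⟧) (m : ℕ) :
    (PolA q N a).coeff m = if m < N then coeff (R := k) (1 + q * m) a else 0 := by
  rw [PolA, coeff_trunc]
  split <;> simp [coeff_mk]

theorem S0_uuA {q N : ℕ} (hq : 0 < q) (a : k⟦X⟧) : S0 q (uuA q N a) := by
  intro n hn
  rw [uuA, coeff_eval₂_X_pow hq, if_neg hn]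

theorem S0_vvA {q N : ℕ} (hq : 0 < q) (a : k⟦X⟧) : S0 q (vvA q N a) := by
  intro n hn
  rw [vvA, coeff_eval₂_X_pow hq, if_neg hn]

theorem uuA_ord {q N i : ℕ} (hq : 0 < q) {a : k⟦X⟧} (hai : (X : k⟦X⟧) ^ (1 + q * i) ∣ a) :
    (X : k⟦X⟧) ^ (q * i) ∣ uuA q N a := by
  apply X_pow_dvd_of_coeff_eq_zero
  intro n hn
  rw [uuA, coeff_eval₂_X_pow hq]
  by_cases hd : q ∣ n
  · rw [if_pos hd, coeff_PolA]
    split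
    · apply coeff_eq_zero_of_X_pow_dvd hai
      rw [Nat.mul_div_cancel' hd]
      omega
    · rfl
  · rw [if_neg hd]

theorem vvA_ord {q N i : ℕ} (hq : 0 < q) {a : k⟦X⟧} (hai : (X : k⟦X⟧) ^ (1 + q * (i+1)) ∣ a) :
    (X : k⟦X⟧) ^ (q * i) ∣ vvA q N a := by
  apply X_pow_dvd_of_coeff_eq_zero
  intro n hn
  rw [vvA, coeff_eval₂_X_pow hq]
  by_cases hd : q ∣ n
  · rw [if_pos hd, Polynomial.coeff_derivative, coeff_PolA]
    split
    · rw [coeff_eq_zero_of_X_pow_dvd hai, zero_mul]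
      have h2 : q * (n / q + 1) = n + q := by
        rw [Nat.mul_add, Nat.mul_div_cancel' hd, mul_one]
      have h3 : q * (i + 1) = q * i + q := by ring
      omega
    · rw [zero_mul]
  · rw [if_neg hd]

theorem Xu_sub_a {q N : ℕ} (hq : 2 ≤ q) {a : k⟦X⟧} (ha1 : S1 q a) :
    (X : k⟦X⟧) ^ N ∣ X * uuA q N a - a := by
  apply X_pow_dvd_of_coeff_eq_zero
  intro n hn
  rw [map_sub]
  cases n with
  | zero =>
      rw [ha1 0 (by rw [Nat.zero_mod]; omega), coeff_zero_eq_constantCoeff_apply, map_mul,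
        constantCoeff_X, zero_mul, sub_zero]
  | succ m =>
      rw [coeff_succ_X_mul, uuA, coeff_eval₂_X_pow (by omega)]
      by_cases hd : q ∣ m
      · have hmN : m / q < N := by
          have := Nat.div_le_self m q
          omega
        rw [if_pos hd, coeff_PolA, if_pos hmN, Nat.mul_div_cancel' hd,
          Nat.add_comm 1 m, sub_self]
      · rw [if_neg hd, ha1 (m+1) (fun hc => hd ((nat_mod_one_iff hq m).mp hc)), sub_self]

theorem B_ord {q i : ℕ} {b : k⟦X⟧} (hbi : (X : k⟦X⟧) ^ (1 + q * i) ∣ b) :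
    (X : k⟦X⟧) ^ ((1 + q * i) * q) ∣ b ^ q := by
  rw [pow_mul]
  exact pow_dvd_pow_of_dvd hbi q

end Stage5

section Stage6
variable {k : Type} [CommRing k]

theorem coeff_mul_extreme {s t : ℕ} {w₁ w₂ : k⟦X⟧} (h1 : (X : k⟦X⟧) ^ s ∣ w₁)
    (h2 : (X : k⟦X⟧) ^ t ∣ w₂) :
    coeff (R := k) (s + t) (w₁ * w₂) = coeff (R := k) s w₁ * coeff (R := k) t w₂ := by
  rw [coeff_mul]
  rw [Finset.sum_eq_single (s, t)]
  · rintro ⟨x, y⟩ hxy hne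
    rw [Finset.HasAntidiagonal.mem_antidiagonal] at hxy
    rcases lt_or_ge x s with hx | hx
    · rw [coeff_eq_zero_of_X_pow_dvd h1 hx, zero_mul]
    · have hy : y < t := by
        rcases Nat.lt_or_ge y t with h | h
        · exact h
        · exfalso; apply hne
          have : x = s := by omega
          subst this
          have : y = t := by omega
          subst this
          rfl
      rw [coeff_eq_zero_of_X_pow_dvd h2 hy, mul_zero]
  · intro hmem
    simp [Finset.mem_antidiagonal] at hmem

theorem crux {p : ℕ} [Fact p.Prime] {r q j N : ℕ} (hqr : q = p ^ r) (hq : 2 ≤ q)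
    (hjN : j + 2 ≤ N) {a b : (ZMod p)⟦X⟧}
    (hai : (X : (ZMod p)⟦X⟧) ^ (1 + q * (j+1)) ∣ a)
    (hbi : (X : (ZMod p)⟦X⟧) ^ (1 + q * (j+1)) ∣ b) :
    (X : (ZMod p)⟦X⟧) ^ (q + q * (j+1) + q * (q * (j+1)))
      ∣ vvA q N a * b ^ q - vvA q N b * a ^ q := by
  have hq0 : 0 < q := by omega
  set n₀ := q * j + (1 + q * (j+1)) * q with hn₀
  have hNn : q + q * (j+1) + q * (q * (j+1)) = n₀ + q := by rw [hn₀]; ring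
  apply X_pow_dvd_of_coeff_eq_zero
  intro n hn
  rw [map_sub]
  have hva := vvA_ord (N := N) hq0 hai
  have hvb := vvA_ord (N := N) hq0 hbi
  have hBb := B_ord hbi
  have hBa := B_ord hai
  have hprodA : (X : (ZMod p)⟦X⟧) ^ n₀ ∣ vvA q N a * b ^ q := by
    rw [hn₀, pow_add]; exact mul_dvd_mul hva hBb
  have hprodB : (X : (ZMod p)⟦X⟧) ^ n₀ ∣ vvA q N b * a ^ q := by
    rw [hn₀, pow_add]; exact mul_dvd_mul hvb hBa
  by_cases hdn : q ∣ n
  · by_cases hlt : n < n₀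
    · rw [coeff_eq_zero_of_X_pow_dvd hprodA hlt, coeff_eq_zero_of_X_pow_dvd hprodB hlt,
        sub_self]
    · have hdn₀ : q ∣ n₀ := ⟨j + (1 + q * (j+1)), by rw [hn₀]; ring⟩
      have hnn₀ : n = n₀ := by
        have hd : q ∣ n - n₀ := Nat.dvd_sub hdn hdn₀
        rcases Nat.eq_zero_or_pos (n - n₀) with h0 | hpos
        · omega
        · have := Nat.le_of_dvd hpos hd
          omega
      subst hnn₀
      have hvav : coeff (R := ZMod p) (q * j) (vvA q N a)
          = coeff (R := ZMod p) (1 + q * (j+1)) a * ((j : ZMod p) + 1) := by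
        rw [vvA, coeff_eval₂_X_pow hq0, if_pos (dvd_mul_right q j),
          Nat.mul_div_cancel_left j hq0, Polynomial.coeff_derivative, coeff_PolA,
          if_pos (by omega : j + 1 < N)]
      have hvbv : coeff (R := ZMod p) (q * j) (vvA q N b)
          = coeff (R := ZMod p) (1 + q * (j+1)) b * ((j : ZMod p) + 1) := by
        rw [vvA, coeff_eval₂_X_pow hq0, if_pos (dvd_mul_right q j),
          Nat.mul_div_cancel_left j hq0, Polynomial.coeff_derivative, coeff_PolA,
          if_pos (by omega : j + 1 < N)]
      have hBbv : coeff (R := ZMod p) ((1 + q * (j+1)) * q) (b ^ q)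
          = coeff (R := ZMod p) (1 + q * (j+1)) b := by
        subst hqr
        rw [coeff_pow_q, if_pos (dvd_mul_left _ _), Nat.mul_div_cancel _ hq0]
      have hBav : coeff (R := ZMod p) ((1 + q * (j+1)) * q) (a ^ q)
          = coeff (R := ZMod p) (1 + q * (j+1)) a := by
        subst hqr
        rw [coeff_pow_q, if_pos (dvd_mul_left _ _), Nat.mul_div_cancel _ hq0]
      rw [hn₀, coeff_mul_extreme hva hBb, coeff_mul_extreme hvb hBa,
        hvav, hvbv, hBbv, hBav]
      ring
  · have hS0a : S0 q (vvA q N a * b ^ q) := S0_mul (S0_vvA hq0 a) (hqr ▸ S0_pow_q r b)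
    have hS0b : S0 q (vvA q N b * a ^ q) := S0_mul (S0_vvA hq0 b) (hqr ▸ S0_pow_q r a)
    rw [hS0a n hdn, hS0b n hdn, sub_self]

end Stage6

section Stage7

theorem side {p : ℕ} [Fact p.Prime] {r q i N : ℕ} (hqr : q = p ^ r) (hq : 2 ≤ q) (hi : 1 ≤ i)
    (hN : N = 1 + q * ((q + 1) * i + 1))
    {f g a b : (ZMod p)⟦X⟧} (hfa : f = X + a) (hgb : g = X + b)
    (ha1 : S1 q a) (hb1 : S1 q b)
    (hai : (X : (ZMod p)⟦X⟧) ^ (1 + q * i) ∣ a)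
    (hbi : (X : (ZMod p)⟦X⟧) ^ (1 + q * i) ∣ b) :
    (X : (ZMod p)⟦X⟧) ^ N ∣ pcomp f g -
      (X + b + X * uuA q N a + b * uuA q N a + X * (vvA q N a * b ^ q)) := by
  obtain ⟨j, rfl⟩ : ∃ j, i = j + 1 := ⟨i - 1, by omega⟩
  have hq0 : 0 < q := by omega
  have hb0 : coeff (R := ZMod p) 0 b = 0 := hb1 0 (by rw [Nat.zero_mod]; omega)
  have hg0 : coeff (R := ZMod p) 0 g = 0 := by
    rw [hgb, map_add, hb0, add_zero, coeff_X, if_neg (by omega)]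
  set α := PowerSeries.mk fun j' => coeff (R := ZMod p) (1 + q * j') a with hα
  have step1 : pcomp f g = g + pcomp a g := by
    rw [hfa, PcompAux.pcomp_add, PcompAux.pcomp_X hg0]
  have step2 : pcomp a g = g * pcomp α (g ^ q) := pcomp_a_eq hq ha1 hg0
  have hcg : constantCoeff (R := ZMod p) g = 0 := by
    rw [← coeff_zero_eq_constantCoeff_apply]; exact hg0
  have hgq0 : coeff (R := ZMod p) 0 (g ^ q) = 0 := by
    rw [coeff_zero_eq_constantCoeff_apply, map_pow, hcg, zero_pow (by omega)]
  have hPA : PolA q N a = trunc N α := rfl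
  have step3 : (X : (ZMod p)⟦X⟧) ^ N ∣ pcomp α (g ^ q)
      - Polynomial.eval₂ (C (R := ZMod p)) (g ^ q) (PolA q N a) := by
    rw [hPA, ← PcompAux.pcomp_coe hgq0]
    exact PcompAux.pcomp_congr hgq0 (PcompAux.X_pow_dvd_sub_trunc α N)
  have step4 : g ^ q = X ^ q + b ^ q := by
    rw [hgb, hqr]
    exact add_pow_char_pow X b p r
  obtain ⟨kk, hkk⟩ := Polynomial.binomExpansion
    ((PolA q N a).map (C (R := ZMod p))) ((X : (ZMod p)⟦X⟧) ^ q) (b ^ q)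
  have heq : Polynomial.eval₂ (C (R := ZMod p)) (g ^ q) (PolA q N a)
      = uuA q N a + vvA q N a * b ^ q + kk * (b ^ q) ^ 2 := by
    rw [step4, ← Polynomial.eval_map, hkk, Polynomial.derivative_map,
      Polynomial.eval_map, Polynomial.eval_map]
    rfl
  have hre : pcomp f g -
      (X + b + X * uuA q N a + b * uuA q N a + X * (vvA q N a * b ^ q))
      = g * (pcomp α (g ^ q) - Polynomial.eval₂ (C (R := ZMod p)) (g ^ q) (PolA q N a))
        + b * (vvA q N a * b ^ q) + (X + b) * (kk * (b ^ q) ^ 2) := by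
    rw [step1, step2, mul_sub, heq, hgb]
    ring
  rw [hre]
  apply dvd_add
  apply dvd_add
  · exact Dvd.dvd.mul_left step3 g
  · have h1 := mul_dvd_mul hbi (mul_dvd_mul (vvA_ord (N := N) hq0 hai) (B_ord hbi))
    rw [← pow_add, ← pow_add] at h1
    refine X_pow_dvd_mono ?_ h1
    subst hN
    nlinarith [Nat.zero_le (q * j)]
  · have h2 : (X : (ZMod p)⟦X⟧) ^ ((1 + q * (j+1)) * q * 2) ∣ (b ^ q) ^ 2 := by
      have h := pow_dvd_pow_of_dvd (B_ord hbi) 2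
      rwa [← pow_mul] at h
    refine X_pow_dvd_mono ?_ (Dvd.dvd.mul_left (Dvd.dvd.mul_left h2 kk) (X + b))
    subst hN
    have h1 : q * j ≤ q * (q * j) := Nat.le_mul_of_pos_left _ hq0
    have h2 : 1 ≤ q * q := by nlinarith
    nlinarith [h1, h2, hq0]

end Stage7

section Stage8

theorem main_congr {p : ℕ} [Fact p.Prime] {r q i N : ℕ} (hqr : q = p ^ r) (hq : 2 ≤ q)
    (hi : 1 ≤ i) (hN : N = 1 + q * ((q + 1) * i + 1))
    {f g : (ZMod p)⟦X⟧} (hf1 : S1 q f) (hg1 : S1 q g)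
    (hfi : (X : (ZMod p)⟦X⟧) ^ (1 + q * i) ∣ f - X)
    (hgi : (X : (ZMod p)⟦X⟧) ^ (1 + q * i) ∣ g - X) :
    (X : (ZMod p)⟦X⟧) ^ N ∣ pcomp f g - pcomp g f := by
  obtain ⟨j, rfl⟩ : ∃ j, i = j + 1 := ⟨i - 1, by omega⟩
  have hq0 : 0 < q := by omega
  have ha1 : S1 q (f - X) := by
    intro n hn
    rw [map_sub, hf1 n hn, S1_X hq n hn, sub_zero]
  have hb1 : S1 q (g - X) := by
    intro n hn
    rw [map_sub, hg1 n hn, S1_X hq n hn, sub_zero]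
  have side1 := side hqr hq hi hN (by ring : f = X + (f - X)) (by ring : g = X + (g - X))
    ha1 hb1 hfi hgi
  have side2 := side hqr hq hi hN (by ring : g = X + (g - X)) (by ring : f = X + (f - X))
    hb1 ha1 hgi hfi
  have P1 : (X : (ZMod p)⟦X⟧) ^ N ∣ X * uuA q N (f - X) - (f - X) := Xu_sub_a hq ha1
  have P2 : (X : (ZMod p)⟦X⟧) ^ N ∣ X * uuA q N (g - X) - (g - X) := Xu_sub_a hq hb1
  have hXa : (X : (ZMod p)⟦X⟧) ∣ (f - X) := by
    rw [X_dvd_iff, ← coeff_zero_eq_constantCoeff_apply]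
    exact ha1 0 (by rw [Nat.zero_mod]; omega)
  have hXb : (X : (ZMod p)⟦X⟧) ∣ (g - X) := by
    rw [X_dvd_iff, ← coeff_zero_eq_constantCoeff_apply]
    exact hb1 0 (by rw [Nat.zero_mod]; omega)
  have P3 : (X : (ZMod p)⟦X⟧) ^ N ∣
      ((g - X) * uuA q N (f - X) - (f - X) * uuA q N (g - X)) := by
    apply X_cancel
    have hid : X * ((g - X) * uuA q N (f - X) - (f - X) * uuA q N (g - X))
        = (g - X) * (X * uuA q N (f - X) - (f - X))
          - (f - X) * (X * uuA q N (g - X) - (g - X)) := by ring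
    rw [hid, pow_succ']
    exact dvd_sub (mul_dvd_mul hXb P1) (mul_dvd_mul hXa P2)
  have hjN : j + 2 ≤ N := by
    have h1 : j + 1 ≤ (q + 1) * (j + 1) := Nat.le_mul_of_pos_left _ (by omega)
    have h2 : (q + 1) * (j + 1) + 1 ≤ q * ((q + 1) * (j + 1) + 1) :=
      Nat.le_mul_of_pos_left _ hq0
    omega
  have hcrux := crux hqr hq hjN hfi hgi
  have P4 : (X : (ZMod p)⟦X⟧) ^ N ∣
      X * (vvA q N (f - X) * (g - X) ^ q - vvA q N (g - X) * (f - X) ^ q) := by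
    have hNe : (X : (ZMod p)⟦X⟧) ^ N
        = X * X ^ (q + q * (j + 1) + q * (q * (j + 1))) := by
      rw [show N = (q + q * (j + 1) + q * (q * (j + 1))) + 1 by subst hN; ring, pow_succ']
    rw [hNe]
    exact mul_dvd_mul_left X hcrux
  have hfinal : pcomp f g - pcomp g f
      = (pcomp f g - (X + (g - X) + X * uuA q N (f - X) + (g - X) * uuA q N (f - X)
          + X * (vvA q N (f - X) * (g - X) ^ q)))
        - (pcomp g f - (X + (f - X) + X * uuA q N (g - X) + (f - X) * uuA q N (g - X)
          + X * (vvA q N (g - X) * (f - X) ^ q)))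
        + ((X * uuA q N (f - X) - (f - X)) - (X * uuA q N (g - X) - (g - X)))
        + ((g - X) * uuA q N (f - X) - (f - X) * uuA q N (g - X))
        + (X * (vvA q N (f - X) * (g - X) ^ q - vvA q N (g - X) * (f - X) ^ q)) := by
    ring
  rw [hfinal]
  exact dvd_add (dvd_add (dvd_add (dvd_sub side1 side2) (dvd_sub P1 P2)) P3) P4

end Stage8

section Final
variable {p : ℕ} [Fact p.Prime]

theorem S1_of_InT {q : ℕ} (hq : 2 ≤ q) {f : (ZMod p)⟦X⟧} (hf : InT q f) : S1 q f := by
  obtain ⟨h0, h1, hbad⟩ := hf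
  intro n hn
  match n with
  | 0 => exact h0
  | 1 => exact absurd (Nat.mod_eq_of_lt hq) hn
  | (m+2) =>
      apply hbad (m+2) (by omega)
      intro hd
      exact hn (by rw [show m + 2 = (m+1) + 1 by rfl, nat_mod_one_iff hq]; exact hd)

theorem InT_of_S1 {q : ℕ} (hq : 2 ≤ q) {f : (ZMod p)⟦X⟧} (hf : S1 q f)
    (h1 : coeff (R := ZMod p) 1 f = 1) : InT q f := by
  refine ⟨hf 0 (by rw [Nat.zero_mod]; omega), h1, ?_⟩
  intro m hm hnd
  apply hf
  intro hmod
  apply hnd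
  have : m = (m - 1) + 1 := by omega
  rw [this, nat_mod_one_iff hq] at hmod
  exact hmod


theorem stmt11 (p : ℕ) [Fact p.Prime] (r : ℕ) (hr : 1 ≤ r) (q : ℕ) (hq : q = p ^ r)
    (i : ℕ) (hi : 1 ≤ i) (f g finv ginv : PowerSeries (ZMod p))
    (hf : InTi q f i) (hg : InTi q g i)
    (hfinv0 : PowerSeries.coeff (R := ZMod p) 0 finv = 0)
    (hginv0 : PowerSeries.coeff (R := ZMod p) 0 ginv = 0)
    (h1 : pcomp f finv = PowerSeries.X) (h2 : pcomp finv f = PowerSeries.X)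
    (h3 : pcomp g ginv = PowerSeries.X) (h4 : pcomp ginv g = PowerSeries.X) :
    InTi q (pcomp (pcomp (pcomp f g) finv) ginv) ((q + 1) * i + 1) := by
  have hp2 : 2 ≤ p := (Fact.out : p.Prime).two_le
  have hq2 : 2 ≤ q := by
    rw [hq]
    calc 2 ≤ p := hp2
    _ = p ^ 1 := (pow_one p).symm
    _ ≤ p ^ r := Nat.pow_le_pow_right (by omega) hr
  set N := 1 + q * ((q + 1) * i + 1) with hN
  have hf0 : coeff (R := ZMod p) 0 f = 0 := hf.1.1
  have hg0 : coeff (R := ZMod p) 0 g = 0 := hg.1.1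
  have hf1c : coeff (R := ZMod p) 1 f = 1 := hf.1.2.1
  have hg1c : coeff (R := ZMod p) 1 g = 1 := hg.1.2.1
  have hfS1 : S1 q f := S1_of_InT hq2 hf.1
  have hgS1 : S1 q g := S1_of_InT hq2 hg.1
  have hfi : (X : (ZMod p)⟦X⟧) ^ (1 + q * i) ∣ f - X := by
    apply X_pow_dvd_of_coeff_eq_zero
    intro n hn
    rw [map_sub, coeff_X]
    match n with
    | 0 => rw [hf0, if_neg (by omega), sub_zero]
    | 1 => rw [hf1c, if_pos rfl, sub_self]
    | (m+2) => rw [hf.2 (m+2) (by omega) hn, if_neg (by omega), sub_zero]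
  have hgi : (X : (ZMod p)⟦X⟧) ^ (1 + q * i) ∣ g - X := by
    apply X_pow_dvd_of_coeff_eq_zero
    intro n hn
    rw [map_sub, coeff_X]
    match n with
    | 0 => rw [hg0, if_neg (by omega), sub_zero]
    | 1 => rw [hg1c, if_pos rfl, sub_self]
    | (m+2) => rw [hg.2 (m+2) (by omega) hn, if_neg (by omega), sub_zero]
  have hcongr : (X : (ZMod p)⟦X⟧) ^ N ∣ pcomp f g - pcomp g f :=
    main_congr hq hq2 hi hN hfS1 hgS1 hfi hgi
  -- collapse: (g∘f)∘finv = g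
  have hstep2 : pcomp (pcomp g f) finv = g := by
    rw [PcompAux.pcomp_assoc hf0 hfinv0, h1, PcompAux.pcomp_X_right]
  have d1 : (X : (ZMod p)⟦X⟧) ^ N ∣ pcomp (pcomp f g) finv - g := by
    have d1' := PcompAux.pcomp_congr hfinv0 hcongr (g := finv)
    rwa [hstep2] at d1'
  have d2 : (X : (ZMod p)⟦X⟧) ^ N ∣ pcomp (pcomp (pcomp f g) finv) ginv - X := by
    have d2' := PcompAux.pcomp_congr hginv0 d1 (g := ginv)
    rwa [h3] at d2'
  -- S1 membership of the commutator
  have hfinvS1 : S1 q finv := S1_inv hq hq2 hfS1 hf1c hfinv0 h1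
  have hginvS1 : S1 q ginv := S1_inv hq hq2 hgS1 hg1c hginv0 h3
  have hcS1 : S1 q (pcomp (pcomp (pcomp f g) finv) ginv) :=
    S1_pcomp hq hq2 (S1_pcomp hq hq2 (S1_pcomp hq hq2 hfS1 hgS1) hfinvS1) hginvS1
  have hN2 : 2 ≤ N := by
    have : 1 ≤ (q + 1) * i + 1 := by omega
    have : (q+1) * i + 1 ≤ q * ((q + 1) * i + 1) := Nat.le_mul_of_pos_left _ (by omega)
    omega
  have hc1 : coeff (R := ZMod p) 1 (pcomp (pcomp (pcomp f g) finv) ginv) = 1 := by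
    have := coeff_eq_zero_of_X_pow_dvd d2 (show 1 < N by omega)
    rw [map_sub, sub_eq_zero] at this
    rw [this, coeff_X, if_pos rfl]
  constructor
  · exact InT_of_S1 hq2 hcS1 hc1
  · intro m hm2 hmlt
    have := coeff_eq_zero_of_X_pow_dvd d2 (show m < N from hmlt)
    rw [map_sub, sub_eq_zero] at this
    rw [this, coeff_X, if_neg (by omega)]
end Final
end
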